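/- Let (X₁,X₂,X₃,X₄) be a random vector on finite alphabets whose entropy function equals a·r₁ + b·r₂ with r₁, r₂ the rank functions of U^{123}_{2,3} and U^{124}_{2,3} respectively. Then X₃ and X₄ are each uniformly distributed on their supports. -/

import Mathlib

/-!
Write `X₀, …, X₃` for the coordinates (the paper's `X₁, …, X₄`). The prescribed entropy profile
gives `H(X₀X₁X₂X₃) = H(X₀X₁) = H(X₀X₂X₃)`, so on the support `p(x) = p(x₀,x₁) = p(x₀,x₂,x₃)`,
and equality in subadditivity (Gibbs' inequality) makes `X₀ ⊥ X₁`, `X₂ ⊥ X₃`, `X₀ ⊥ X₂X₃` and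
`X₁ ⊥ X₂X₃`. Factoring both expressions for `p(x)` gives `p(x₁) = p(x₂) p(x₃)` on the support.
As `X₁, X₂, X₃` are mutually independent, every triple of values of positive marginal probability
occurs, so `p(x₂)` is constant on the support of `X₂`, and likewise `p(x₃)`.
-/

open Finset

/-- Probability that the discrete random variable `Y` (on finite sample space `Ω`
with pmf `p`) takes the value `s`. -/
noncomputable def pr {Ω : Type} [Fintype Ω] {S : Type} [DecidableEq S]
    (p : Ω → ℝ) (Y : Ω → S) (s : S) : ℝ := ∑ ω, if Y ω = s then p ω else 0

/-- Shannon entropy (base 2) of the discrete random variable `Y`. -/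
noncomputable def ent {Ω : Type} [Fintype Ω] {S : Type} [DecidableEq S]
    (p : Ω → ℝ) (Y : Ω → S) : ℝ :=
  - ∑ s ∈ Finset.univ.image Y, pr p Y s * Real.logb 2 (pr p Y s)

/-- `h : 2^{N_n} → ℝ` is entropic: it is the entropy function of some random
vector `(X_1, …, X_n)` on finite alphabets. -/
def IsEntropic (n : ℕ) (h : Finset (Fin n) → ℝ) : Prop :=
  ∃ (m : Fin n → ℕ) (p : (∀ i, Fin (m i)) → ℝ),
    (∀ x, 0 ≤ p x) ∧ (∑ x, p x) = 1 ∧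
    ∀ A : Finset (Fin n), h A = ent p (fun x (i : A) => x i.1)

/-- Rank function of the matroid U^{B}_{k,|B|} on N₄ = {0,1,2,3}. -/
noncomputable def rkU (k : ℕ) (B : Finset (Fin 4)) (A : Finset (Fin 4)) : ℝ :=
  min (k : ℝ) ((A ∩ B).card : ℝ)

open Real InformationTheory

lemma mul_klFun_div {f g : ℝ} (hf : 0 ≤ f) (hfg : 0 < f → 0 < g) :
    g * klFun (f / g) = f * log f - f * log g + g - f := by
  rcases hf.eq_or_lt with rfl | hf
  · simp [klFun_zero]
  · have hg := hfg hf
    rw [klFun_apply, log_div hf.ne' hg.ne']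
    field_simp

/-- The equality case of Gibbs' inequality. -/
lemma eq_of_sum_mul_log_eq {ι : Type} [Fintype ι] {f g : ι → ℝ} (hf : ∀ i, 0 ≤ f i)
    (hg : ∀ i, 0 ≤ g i) (hfg : ∀ i, 0 < f i → 0 < g i) (hsum : ∑ i, g i = ∑ i, f i)
    (h : ∑ i, f i * log (f i) = ∑ i, f i * log (g i)) : f = g := by
  have hterm : ∀ i, 0 ≤ g i * klFun (f i / g i) := fun i =>
    mul_nonneg (hg i) (klFun_nonneg (div_nonneg (hf i) (hg i)))
  have hzero : ∑ i, g i * klFun (f i / g i) = 0 := by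
    simp only [mul_klFun_div (hf _) (hfg _), sum_sub_distrib, sum_add_distrib, h, hsum]
    ring
  funext i
  rcases mul_eq_zero.1 ((sum_eq_zero_iff_of_nonneg fun i _ => hterm i).1 hzero i (mem_univ i))
    with hgi | hkl
  · have : ¬ 0 < f i := fun hfi => (hfg i hfi).ne' hgi
    linarith [hf i]
  · have hfg1 := (klFun_eq_zero_iff (div_nonneg (hf i) (hg i))).1 hkl
    exact (div_eq_one_iff_eq fun h0 => by simp [h0] at hfg1).1 hfg1

section

variable {Ω : Type} [Fintype Ω] {S T U : Type} [DecidableEq S] [DecidableEq T] [DecidableEq U]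

def UniformOnSupport (p : Ω → ℝ) (Y : Ω → S) : Prop :=
  ∀ s s', 0 < pr p Y s → 0 < pr p Y s' → pr p Y s = pr p Y s'

variable {p : Ω → ℝ}

lemma pr_congr {Y : Ω → S} {Z : Ω → T} {s : S} {t : T} (h : ∀ ω, Y ω = s ↔ Z ω = t) :
    pr p Y s = pr p Z t :=
  sum_congr rfl fun ω _ => if_congr (h ω) rfl rfl

lemma pr_nonneg (hp : ∀ ω, 0 ≤ p ω) (Y : Ω → S) (s : S) : 0 ≤ pr p Y s :=
  sum_nonneg fun ω _ => by split_ifs <;> simp [hp ω]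

lemma pr_apply_pos (hp : ∀ ω, 0 ≤ p ω) (Y : Ω → S) {ω : Ω} (hω : 0 < p ω) :
    0 < pr p Y (Y ω) := by
  have := single_le_sum (f := fun ω' => if Y ω' = Y ω then p ω' else 0)
    (fun ω' _ => by split_ifs <;> simp [hp ω']) (mem_univ ω)
  exact hω.trans_le (by simpa [pr] using this)

lemma exists_pos_of_pr_pos {Y : Ω → S} {s : S} (h : 0 < pr p Y s) :
    ∃ ω, 0 < p ω ∧ Y ω = s := by
  obtain ⟨ω, -, hω⟩ := exists_lt_of_sum_lt (f := fun _ => (0 : ℝ)) (by simpa [pr] using h)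
  by_cases hY : Y ω = s
  · exact ⟨ω, by simpa [hY] using hω, hY⟩
  · simp [hY] at hω

lemma pr_pair_le_left (hp : ∀ ω, 0 ≤ p ω) (Y : Ω → S) (Z : Ω → T) (y : S) (z : T) :
    pr p (fun ω => (Y ω, Z ω)) (y, z) ≤ pr p Y y :=
  sum_le_sum fun ω _ => by
    by_cases hy : Y ω = y <;> by_cases hz : Z ω = z <;> simp [hy, hz, hp ω]

lemma pr_pair_le_right (hp : ∀ ω, 0 ≤ p ω) (Y : Ω → S) (Z : Ω → T) (y : S) (z : T) :
    pr p (fun ω => (Y ω, Z ω)) (y, z) ≤ pr p Z z :=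
  sum_le_sum fun ω _ => by
    by_cases hy : Y ω = y <;> by_cases hz : Z ω = z <;> simp [hy, hz, hp ω]

lemma sum_pr_mul [Fintype S] (Y : Ω → S) (F : S → ℝ) :
    ∑ s, pr p Y s * F s = ∑ ω, p ω * F (Y ω) := by
  simp only [pr, sum_mul, ite_mul, zero_mul]
  rw [sum_comm]
  simp

lemma sum_pr [Fintype S] (Y : Ω → S) : ∑ s, pr p Y s = ∑ ω, p ω := by
  simpa using sum_pr_mul (p := p) Y 1

lemma ent_eq_neg_sum_log (Y : Ω → S) :
    ent p Y = -(∑ ω, p ω * log (pr p Y (Y ω))) / log 2 := by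
  simp only [ent, pr, logb, sum_mul, ite_mul, zero_mul]
  rw [sum_comm, neg_div, sum_div]
  simp [mul_div_assoc]

lemma ent_congr {Y : Ω → S} {Z : Ω → T} (h : ∀ ω ω', Y ω' = Y ω ↔ Z ω' = Z ω) :
    ent p Y = ent p Z := by
  simp only [ent_eq_neg_sum_log, pr_congr (h _)]

lemma pr_pair_apply_eq_of_ent_pair_eq (hp : ∀ ω, 0 ≤ p ω) {V : Ω → S} {W : Ω → T}
    (h : ent p (fun ω => (V ω, W ω)) = ent p V) {ω : Ω} (hω : 0 < p ω) :
    pr p (fun ω => (V ω, W ω)) (V ω, W ω) = pr p V (V ω) := by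
  rw [ent_eq_neg_sum_log, ent_eq_neg_sum_log, div_left_inj' (log_pos one_lt_two).ne',
    neg_inj] at h
  have hle : ∀ ω' ∈ univ, p ω' * log (pr p (fun ω => (V ω, W ω)) (V ω', W ω'))
      ≤ p ω' * log (pr p V (V ω')) := by
    intro ω' _
    rcases (hp ω').eq_or_lt with h0 | hpos
    · simp [← h0]
    · exact mul_le_mul_of_nonneg_left
        (log_le_log (pr_apply_pos hp _ hpos) (pr_pair_le_left hp V W _ _)) hpos.le
  have hlog := mul_left_cancel₀ hω.ne' ((sum_eq_sum_iff_of_le hle).1 h ω (mem_univ ω))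
  exact log_injOn_pos (pr_apply_pos hp _ hω) (pr_apply_pos hp V hω) hlog

lemma pr_pair_eq_mul_of_ent_pair_eq_add [Fintype S] [Fintype T] (hp : ∀ ω, 0 ≤ p ω)
    (hsum : ∑ ω, p ω = 1) {Y : Ω → S} {Z : Ω → T}
    (h : ent p (fun ω => (Y ω, Z ω)) = ent p Y + ent p Z) (y : S) (z : T) :
    pr p (fun ω => (Y ω, Z ω)) (y, z) = pr p Y y * pr p Z z := by
  rw [ent_eq_neg_sum_log, ent_eq_neg_sum_log, ent_eq_neg_sum_log, ← add_div,
    div_left_inj' (log_pos one_lt_two).ne', ← neg_add, neg_inj, ← sum_add_distrib] at h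
  have hlog_mul : ∀ ω, p ω * log (pr p Y (Y ω) * pr p Z (Z ω))
      = p ω * log (pr p Y (Y ω)) + p ω * log (pr p Z (Z ω)) := by
    intro ω
    rcases (hp ω).eq_or_lt with h0 | hpos
    · simp [← h0]
    · rw [log_mul (pr_apply_pos hp Y hpos).ne' (pr_apply_pos hp Z hpos).ne', mul_add]
  refine congrFun (eq_of_sum_mul_log_eq (g := fun q => pr p Y q.1 * pr p Z q.2)
    (pr_nonneg hp _) (fun q => mul_nonneg (pr_nonneg hp _ _) (pr_nonneg hp _ _))
    (fun q hq => mul_pos (hq.trans_le (pr_pair_le_left hp Y Z _ _))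
      (hq.trans_le (pr_pair_le_right hp Y Z _ _))) ?_ ?_) (y, z)
  · rw [Fintype.sum_prod_type, ← sum_mul_sum, sum_pr, sum_pr, sum_pr, hsum, one_mul]
  · rw [sum_pr_mul (fun ω => (Y ω, Z ω)) (fun q => log (pr p _ q)),
      sum_pr_mul (fun ω => (Y ω, Z ω)) (fun q => log (pr p Y q.1 * pr p Z q.2))]
    simp only [hlog_mul, h]

lemma uniformOnSupport_of_pr_eq_mul (hp : ∀ ω, 0 ≤ p ω) {X : Ω → S} {Y : Ω → T} {Z : Ω → U}
    (hind : ∀ x y z,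
      pr p (fun ω => (X ω, Y ω, Z ω)) (x, y, z) = pr p X x * (pr p Y y * pr p Z z))
    (hrel : ∀ ω, 0 < p ω → pr p X (X ω) = pr p Y (Y ω) * pr p Z (Z ω)) :
    UniformOnSupport p Y ∧ UniformOnSupport p Z := by
  -- Independence makes the support of `(X, Y, Z)` a product, so `hrel` holds on all of it.
  have hprod : ∀ x y z, 0 < pr p X x → 0 < pr p Y y → 0 < pr p Z z →
      pr p X x = pr p Y y * pr p Z z := by
    intro x y z hx hy hz
    obtain ⟨ω, hω, hωxyz⟩ := exists_pos_of_pr_pos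
      (show 0 < pr p (fun ω => (X ω, Y ω, Z ω)) (x, y, z) by rw [hind]; positivity)
    simp only [Prod.mk.injEq] at hωxyz
    obtain ⟨rfl, rfl, rfl⟩ := hωxyz
    exact hrel ω hω
  constructor
  · intro y y' hy hy'
    obtain ⟨ω, hω, -⟩ := exists_pos_of_pr_pos hy
    have hX := pr_apply_pos hp X hω
    have hZ := pr_apply_pos hp Z hω
    exact mul_right_cancel₀ hZ.ne' ((hprod _ _ _ hX hy hZ).symm.trans (hprod _ _ _ hX hy' hZ))
  · intro z z' hz hz'
    obtain ⟨ω, hω, -⟩ := exists_pos_of_pr_pos hz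
    have hX := pr_apply_pos hp X hω
    have hY := pr_apply_pos hp Y hω
    exact mul_left_cancel₀ hY.ne' ((hprod _ _ _ hX hY hz).symm.trans (hprod _ _ _ hX hY hz'))

theorem uniformOnSupport_of_ent_eq {S₀ S₁ S₂ S₃ : Type} [Fintype S₀] [Fintype S₁] [Fintype S₂]
    [Fintype S₃] [DecidableEq S₀] [DecidableEq S₁] [DecidableEq S₂] [DecidableEq S₃]
    (hp : ∀ ω, 0 ≤ p ω) (hsum : ∑ ω, p ω = 1)
    {X₀ : Ω → S₀} {X₁ : Ω → S₁} {X₂ : Ω → S₂} {X₃ : Ω → S₃}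
    (h₀₁ : ent p (fun ω => (X₀ ω, X₁ ω)) = ent p X₀ + ent p X₁)
    (h₂₃ : ent p (fun ω => (X₂ ω, X₃ ω)) = ent p X₂ + ent p X₃)
    (h₀₂₃ : ent p (fun ω => (X₀ ω, X₂ ω, X₃ ω)) = ent p X₀ + ent p (fun ω => (X₂ ω, X₃ ω)))
    (h₁₂₃ : ent p (fun ω => (X₁ ω, X₂ ω, X₃ ω)) = ent p X₁ + ent p (fun ω => (X₂ ω, X₃ ω)))
    (h₀₁₂₃ : ent p (fun ω => ((X₀ ω, X₁ ω), X₂ ω, X₃ ω)) = ent p (fun ω => (X₀ ω, X₁ ω)))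
    (h₀₂₃₁ :
      ent p (fun ω => ((X₀ ω, X₂ ω, X₃ ω), X₁ ω)) = ent p (fun ω => (X₀ ω, X₂ ω, X₃ ω))) :
    UniformOnSupport p X₂ ∧ UniformOnSupport p X₃ := by
  have i₀₁ := pr_pair_eq_mul_of_ent_pair_eq_add hp hsum h₀₁
  have i₂₃ := pr_pair_eq_mul_of_ent_pair_eq_add hp hsum h₂₃
  have i₀₂₃ := pr_pair_eq_mul_of_ent_pair_eq_add hp hsum h₀₂₃
  have i₁₂₃ := pr_pair_eq_mul_of_ent_pair_eq_add hp hsum h₁₂₃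
  refine uniformOnSupport_of_pr_eq_mul hp (fun x y z => by rw [i₁₂₃, i₂₃]) fun ω hω => ?_
  refine mul_left_cancel₀ (pr_apply_pos hp X₀ hω).ne' ?_
  calc pr p X₀ (X₀ ω) * pr p X₁ (X₁ ω)
      = pr p (fun ω => ((X₀ ω, X₁ ω), X₂ ω, X₃ ω)) ((X₀ ω, X₁ ω), X₂ ω, X₃ ω) := by
        rw [pr_pair_apply_eq_of_ent_pair_eq hp h₀₁₂₃ hω, i₀₁]
    _ = pr p (fun ω => ((X₀ ω, X₂ ω, X₃ ω), X₁ ω)) ((X₀ ω, X₂ ω, X₃ ω), X₁ ω) :=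
        pr_congr fun ω' => by simp only [Prod.mk.injEq]; tauto
    _ = pr p X₀ (X₀ ω) * (pr p X₂ (X₂ ω) * pr p X₃ (X₃ ω)) := by
        rw [pr_pair_apply_eq_of_ent_pair_eq hp h₀₂₃₁ hω, i₀₂₃, i₂₃]

end

/-- Key structural step of Theorem 5: if the entropy function of a random
vector (X₁,X₂,X₃,X₄) equals a·r(U^{123}_{2,3}) + b·r(U^{124}_{2,3}), then X₃
and X₄ are each uniformly distributed on their supports. -/
theorem uniform_marginals_on_face_U123_23_U124_23 (a b : ℝ)
    (m : Fin 4 → ℕ) (p : (∀ i, Fin (m i)) → ℝ)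
    (hp : ∀ x, 0 ≤ p x) (hsum : (∑ x, p x) = 1)
    (hent : ∀ A : Finset (Fin 4),
      ent p (fun x (i : A) => x i.1) =
        a * rkU 2 ({0,1,2} : Finset (Fin 4)) A +
        b * rkU 2 ({0,1,3} : Finset (Fin 4)) A) :
    (∀ s s' : Fin (m 2), 0 < pr p (fun x => x 2) s → 0 < pr p (fun x => x 2) s' →
      pr p (fun x => x 2) s = pr p (fun x => x 2) s') ∧
    (∀ s s' : Fin (m 3), 0 < pr p (fun x => x 3) s → 0 < pr p (fun x => x 3) s' →
      pr p (fun x => x 3) s = pr p (fun x => x 3) s') := by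
  have hent_coords (A : Finset (Fin 4)) {S : Type} [DecidableEq S] (Y : (∀ i, Fin (m i)) → S)
      (hY : ∀ x x', Y x' = Y x ↔ ∀ i ∈ A, x' i = x i) :
      ent p Y = a * rkU 2 {0,1,2} A + b * rkU 2 {0,1,3} A :=
    (ent_congr fun x x' => by simp [hY, funext_iff]).trans (hent A)
  refine uniformOnSupport_of_ent_eq hp hsum (X₀ := fun x => x 0) (X₁ := fun x => x 1)
    (X₂ := fun x => x 2) (X₃ := fun x => x 3) ?_ ?_ ?_ ?_ ?_ ?_
  · rw [hent_coords {0, 1} _ (by simp [Prod.ext_iff]), hent_coords {0} _ (by simp),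
      hent_coords {1} _ (by simp)]
    norm_num +decide [rkU]; ring
  · rw [hent_coords {2, 3} _ (by simp [Prod.ext_iff]), hent_coords {2} _ (by simp),
      hent_coords {3} _ (by simp)]
    norm_num +decide [rkU]
  · rw [hent_coords {0, 2, 3} _ (by simp [Prod.ext_iff]), hent_coords {0} _ (by simp),
      hent_coords {2, 3} _ (by simp [Prod.ext_iff])]
    norm_num +decide [rkU]; ring
  · rw [hent_coords {1, 2, 3} _ (by simp [Prod.ext_iff]), hent_coords {1} _ (by simp),
      hent_coords {2, 3} _ (by simp [Prod.ext_iff])]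
    norm_num +decide [rkU]; ring
  · rw [hent_coords {0, 1, 2, 3} _ (by simp [Prod.ext_iff, and_assoc]),
      hent_coords {0, 1} _ (by simp [Prod.ext_iff])]
    norm_num +decide [rkU]
  · rw [hent_coords {0, 1, 2, 3} _ (by simp [Prod.ext_iff]; tauto),
      hent_coords {0, 2, 3} _ (by simp [Prod.ext_iff])]
    norm_num +decide [rkU]
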